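/- For every integer k ≥ 2, A(x) = x^k - x^{k-1} - ... - 1 has no pure imaginary roots: if z = it with t real and t ≠ 0, then A(z) ≠ 0. -/

import Mathlib

/-! If `z ^ k = ∑_{j<k} z ^ j`, multiplying by `z - 1` gives `z ^ k * (z - 2) = -1`.
For `z = t * I` the power `z ^ k = t ^ k * I ^ k` is purely real or purely imaginary,
and comparing real and imaginary parts of `z ^ k * (t * I - 2) = -1` forces `t = 0`. -/

open Polynomial Finset

lemma pow_mul_sub_two_eq_neg_one_of_isRoot {R : Type*} [CommRing R] {k : ℕ} {z : R}
    (h : ((X : R[X]) ^ k - ∑ j ∈ range k, X ^ j).IsRoot z) : z ^ k * (z - 2) = -1 := by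
  have hz : z ^ k = ∑ j ∈ range k, z ^ j := by
    simpa [eval_finsetSum, sub_eq_zero] using h
  linear_combination (z - 1) * hz + geom_sum_mul z k

namespace Complex

lemma re_mul_im_I_pow (k : ℕ) : (I ^ k).re * (I ^ k).im = 0 := by
  have hI : ∀ m : ℕ, I ^ (2 * m) = ((-1 : ℝ) ^ m : ℝ) := fun m => by
    rw [pow_mul, I_sq, ofReal_pow, ofReal_neg, ofReal_one]
  obtain ⟨m, rfl | rfl⟩ := Nat.even_or_odd' k
  · rw [hI, ofReal_im, mul_zero]
  · rw [pow_succ, hI, re_ofReal_mul, I_re, mul_zero, zero_mul]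

lemma re_mul_im_ofReal_mul_I_pow (t : ℝ) (k : ℕ) :
    ((t * I) ^ k).re * ((t * I) ^ k).im = 0 := by
  rw [mul_pow, ← ofReal_pow, re_ofReal_mul, im_ofReal_mul]
  linear_combination (t ^ k) ^ 2 * re_mul_im_I_pow k

end Complex

theorem stmt_5 (k : ℕ) (t : ℝ) (ht : t ≠ 0) :
    ¬ ((X : Polynomial ℂ) ^ k - ∑ j ∈ range k, X ^ j).IsRoot (t * Complex.I) := by
  intro h
  set w := ((t : ℂ) * Complex.I) ^ k
  have hw : w * (t * Complex.I - 2) = -1 := pow_mul_sub_two_eq_neg_one_of_isRoot h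
  have hre : -(w.re * 2) - w.im * t = -1 := by simpa using congrArg Complex.re hw
  have him : w.re * t + -(w.im * 2) = 0 := by simpa using congrArg Complex.im hw
  have hprod : w.re * w.im = 0 := Complex.re_mul_im_ofReal_mul_I_pow t k
  have hw_im : w.im = 0 := by
    have : w.im ^ 2 = 0 := by linear_combination (t * hprod - w.im * him) / 2
    exact pow_eq_zero_iff two_ne_zero |>.mp this
  have hw_re : w.re = 1 / 2 := by linear_combination (-hre - t * hw_im) / 2
  exact ht (by linear_combination 2 * him + 4 * hw_im - 2 * t * hw_re)
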